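/- Let 𝕊, 𝕋 be algebraic theories with free algebra monads S, T, let λ : ST ⇒ TS be a distributive law, and let 𝕌^λ be the theory with signature Σ_𝕊 ⊎ Σ_𝕋 and equations E_𝕊 ∪ E_𝕋 ∪ E_λ. Then any two separated terms that are 𝕌^λ-equal are equal modulo (𝕊,𝕋): if t[s_x/x] =_{𝕌^λ} t'[s'_y/y] then [t[[s_x]_𝕊/x]]_𝕋 = [t'[[s'_y]_𝕊/y]]_𝕋 in TS𝒱. -/

import Mathlib

/-! ## Algebraic signatures, terms and equational logic -/

/-- An algebraic signature: a set of operation symbols with arities. -/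
structure Sgn where
  ops : Type
  ar : ops → ℕ

/-- Terms over a signature `σ` with variables in `X`. -/
inductive Trm (σ : Sgn) (X : Type) : Type
  | var : X → Trm σ X
  | op : (f : σ.ops) → (Fin (σ.ar f) → Trm σ X) → Trm σ X

/-- Simultaneous substitution. -/
def Trm.bind {σ : Sgn} {X Y : Type} : Trm σ X → (X → Trm σ Y) → Trm σ Y
  | .var x, g => g x
  | .op f k, g => .op f fun i => (k i).bind g

/-- Renaming of variables. -/
def Trm.rename {σ : Sgn} {X Y : Type} (f : X → Y) (t : Trm σ X) : Trm σ Y :=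
  t.bind fun x => .var (f x)

/-- Equations over `σ`: pairs of terms over the fixed countable set `ℕ` of variables. -/
abbrev Eqn (σ : Sgn) := Trm σ ℕ × Trm σ ℕ

/-- Derivability in equational logic from the set of axioms `E`
(axioms, reflexivity, symmetry, transitivity, congruence, substitution). -/
inductive Deriv {σ : Sgn} (E : Set (Eqn σ)) : {X : Type} → Trm σ X → Trm σ X → Prop
  | ax {X : Type} {e : Eqn σ} (he : e ∈ E) (g : ℕ → Trm σ X) :
      Deriv E (e.1.bind g) (e.2.bind g)
  | refl {X : Type} (t : Trm σ X) : Deriv E t t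
  | symm {X : Type} {s t : Trm σ X} : Deriv E s t → Deriv E t s
  | trans {X : Type} {s t u : Trm σ X} : Deriv E s t → Deriv E t u → Deriv E s u
  | congr {X : Type} (f : σ.ops) {k k' : Fin (σ.ar f) → Trm σ X} :
      (∀ i, Deriv E (k i) (k' i)) → Deriv E (.op f k) (.op f k')
  | subst {X Y : Type} {s t : Trm σ X} (g : X → Trm σ Y) :
      Deriv E s t → Deriv E (s.bind g) (t.bind g)

/-- An algebraic theory: a signature together with a set of equations. -/
structure Thy where
  sig : Sgn
  eqns : Set (Eqn sig)

/-! ## The free algebra monad -/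

/-- Carrier of the free algebra monad: terms modulo derivable equality. -/
def FreeM (σ : Sgn) (E : Set (Eqn σ)) (X : Type) : Type :=
  Quot (fun s t : Trm σ X => Deriv E s t)

/-- Equivalence class of a term. -/
def FreeM.mk {σ : Sgn} {E : Set (Eqn σ)} {X : Type} (t : Trm σ X) : FreeM σ E X :=
  Quot.mk _ t

/-- Functorial action of the free algebra monad. -/
noncomputable def FreeM.map {σ : Sgn} {E : Set (Eqn σ)} {X Y : Type}
    (f : X → Y) (q : FreeM σ E X) : FreeM σ E Y :=
  FreeM.mk ((Quot.out q).rename f)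

/-- Unit of the free algebra monad. -/
def FreeM.unit {σ : Sgn} {E : Set (Eqn σ)} {X : Type} (x : X) : FreeM σ E X :=
  FreeM.mk (.var x)

/-- Multiplication of the free algebra monad (flattening). -/
noncomputable def FreeM.mul {σ : Sgn} {E : Set (Eqn σ)} {X : Type}
    (q : FreeM σ E (FreeM σ E X)) : FreeM σ E X :=
  FreeM.mk ((Quot.out q).bind fun c => Quot.out c)

/-! ## Disjoint union of signatures and separated terms -/

/-- Disjoint union of two signatures. -/
def Sgn.sum (σ τ : Sgn) : Sgn := ⟨σ.ops ⊕ τ.ops, Sum.elim σ.ar τ.ar⟩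

/-- Embedding of `σ`-terms into terms over the sum signature. -/
def Trm.inl {σ τ : Sgn} {X : Type} : Trm σ X → Trm (σ.sum τ) X
  | .var x => .var x
  | .op f k => .op (Sum.inl f) fun i => (k i).inl

/-- Embedding of `τ`-terms into terms over the sum signature. -/
def Trm.inr {σ τ : Sgn} {X : Type} : Trm τ X → Trm (σ.sum τ) X
  | .var x => .var x
  | .op f k => .op (Sum.inr f) fun i => (k i).inr

/-- Flattening of a separated term `t[s_x/x]` (`τ`-term over `σ`-terms)
into a term over the sum signature. -/
def sepTS {σ τ : Sgn} {X : Type} (t : Trm τ (Trm σ X)) : Trm (σ.sum τ) X :=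
  (Trm.inr t).bind fun s => Trm.inl s

/-- Flattening of a mixed term `s[t_x/x]` (`σ`-term over `τ`-terms)
into a term over the sum signature. -/
def sepST {σ τ : Sgn} {X : Type} (s : Trm σ (Trm τ X)) : Trm (σ.sum τ) X :=
  (Trm.inl s).bind fun t => Trm.inr t

/-- The element `[t[[s_x]_𝕊/x]]_𝕋` of `TSX` determined by a separated term. -/
def clTS (SS TT : Thy) {X : Type} (t : Trm TT.sig (Trm SS.sig X)) :
    FreeM TT.sig TT.eqns (FreeM SS.sig SS.eqns X) :=
  FreeM.mk (t.rename FreeM.mk)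

/-- The element `[s[[t_x]_𝕋/x]]_𝕊` of `STX` determined by a mixed term. -/
def clST (SS TT : Thy) {X : Type} (s : Trm SS.sig (Trm TT.sig X)) :
    FreeM SS.sig SS.eqns (FreeM TT.sig TT.eqns X) :=
  FreeM.mk (s.rename FreeM.mk)

/-! ## Composite theories -/

/-- A composite theory of `TT` after `SS`: a theory on the disjoint union
of the signatures, containing both sets of equations, in which every term
has a separation, and separations are essentially unique. -/
structure Composite (SS TT : Thy) where
  eqns : Set (Eqn (SS.sig.sum TT.sig))
  containsS : ∀ e ∈ SS.eqns, ((Trm.inl e.1 : Trm (SS.sig.sum TT.sig) ℕ), Trm.inl e.2) ∈ eqns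
  containsT : ∀ e ∈ TT.eqns, ((Trm.inr e.1 : Trm (SS.sig.sum TT.sig) ℕ), Trm.inr e.2) ∈ eqns
  sepExists : ∀ u : Trm (SS.sig.sum TT.sig) ℕ,
      ∃ t : Trm TT.sig (Trm SS.sig ℕ), Deriv eqns u (sepTS t)
  sepUnique : ∀ t t' : Trm TT.sig (Trm SS.sig ℕ),
      Deriv eqns (sepTS t) (sepTS t') → clTS SS TT t = clTS SS TT t'

/-! ## Distributive laws between free algebra monads -/

/-- A distributive law `λ : ST ⇒ TS` between the free algebra monads of `SS` and `TT`. -/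
structure DistLaw (SS TT : Thy) where
  app : ∀ X : Type, FreeM SS.sig SS.eqns (FreeM TT.sig TT.eqns X) →
      FreeM TT.sig TT.eqns (FreeM SS.sig SS.eqns X)
  natural : ∀ (X Y : Type) (f : X → Y)
      (q : FreeM SS.sig SS.eqns (FreeM TT.sig TT.eqns X)),
      app Y (FreeM.map (FreeM.map f) q) = FreeM.map (FreeM.map f) (app X q)
  unitS : ∀ (X : Type) (q : FreeM TT.sig TT.eqns X),
      app X (FreeM.unit q) = FreeM.map FreeM.unit q
  unitT : ∀ (X : Type) (q : FreeM SS.sig SS.eqns X),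
      app X (FreeM.map FreeM.unit q) = FreeM.unit q
  mulS : ∀ (X : Type)
      (q : FreeM SS.sig SS.eqns (FreeM SS.sig SS.eqns (FreeM TT.sig TT.eqns X))),
      app X (FreeM.mul q) =
        FreeM.map FreeM.mul (app (FreeM SS.sig SS.eqns X) (FreeM.map (app X) q))
  mulT : ∀ (X : Type)
      (q : FreeM SS.sig SS.eqns (FreeM TT.sig TT.eqns (FreeM TT.sig TT.eqns X))),
      app X (FreeM.map FreeM.mul q) =
        FreeM.mul (FreeM.map (app X) (app (FreeM TT.sig TT.eqns X) q))

/-! ## The theory `𝕌^λ` obtained from a distributive law -/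

/-- The set `E_λ` of all equations between mixed terms and separated terms
that are related by the distributive law `λ`. -/
def Elam (SS TT : Thy) (d : DistLaw SS TT) : Set (Eqn (SS.sig.sum TT.sig)) :=
  { e | ∃ (s : Trm SS.sig (Trm TT.sig ℕ)) (t : Trm TT.sig (Trm SS.sig ℕ)),
      e = (sepST s, sepTS t) ∧ d.app ℕ (clST SS TT s) = clTS SS TT t }

/-- The equations of `𝕊`, embedded into the sum signature. -/
def embedS (SS TT : Thy) : Set (Eqn (SS.sig.sum TT.sig)) :=
  { e | ∃ e₀ ∈ SS.eqns, e = (Trm.inl e₀.1, Trm.inl e₀.2) }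

/-- The equations of `𝕋`, embedded into the sum signature. -/
def embedT (SS TT : Thy) : Set (Eqn (SS.sig.sum TT.sig)) :=
  { e | ∃ e₀ ∈ TT.eqns, e = (Trm.inr e₀.1, Trm.inr e₀.2) }

/-- The equations `E_𝕊 ∪ E_𝕋 ∪ E_λ` of the theory `𝕌^λ`. -/
def EUlam (SS TT : Thy) (d : DistLaw SS TT) : Set (Eqn (SS.sig.sum TT.sig)) :=
  embedS SS TT ∪ embedT SS TT ∪ Elam SS TT d


/-! `TS` carries an algebra structure for `Σ_𝕊 ⊎ Σ_𝕋`: a `𝕋`-operation acts on the outer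
layer of `TSX`, while an `𝕊`-operation applied to elements of `TSX` gives an element of `STSX`,
which `λ` sends to `TSSX` and the multiplication of `S` flattens. The monad laws and the axioms
of `λ` make the Kleisli extension of `TS` a homomorphism for this structure, so it suffices to
check the equations of `𝕌^λ` at the unit valuation, where a mixed term `s[t_x/x]` evaluates to
`λ [s[[t_x]_𝕋/x]]_𝕊` and a separated term `t[s_x/x]` to `[t[[s_x]_𝕊/x]]_𝕋`. Soundness of
equational logic for this algebra then gives the theorem. -/

section EquationalLogic

variable {σ : Sgn} {E : Set (Eqn σ)} {A X Y Z : Type}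

theorem Trm.bind_bind (t : Trm σ X) (g : X → Trm σ Y) (h : Y → Trm σ Z) :
    (t.bind g).bind h = t.bind fun x => (g x).bind h := by
  induction t with
  | var x => rfl
  | op f k ih => exact congrArg _ (funext ih)

theorem Trm.bind_var (t : Trm σ X) : t.bind .var = t := by
  induction t with
  | var x => rfl
  | op f k ih => exact congrArg _ (funext ih)

theorem Deriv.of_mem {e : Eqn σ} (he : e ∈ E) : Deriv E e.1 e.2 := by
  simpa only [Trm.bind_var] using Deriv.ax he .var

theorem Deriv.bind_congr (t : Trm σ X) {g g' : X → Trm σ Y} (h : ∀ x, Deriv E (g x) (g' x)) :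
    Deriv E (t.bind g) (t.bind g') := by
  induction t with
  | var x => exact h x
  | op f k ih => exact Deriv.congr f ih

theorem Deriv.equivalence (E : Set (Eqn σ)) (X : Type) :
    Equivalence (Deriv E : Trm σ X → Trm σ X → Prop) :=
  ⟨Deriv.refl, Deriv.symm, Deriv.trans⟩

abbrev Sgn.Alg (σ : Sgn) (A : Type) : Type := (f : σ.ops) → (Fin (σ.ar f) → A) → A

def Trm.eval (α : σ.Alg A) (ρ : X → A) : Trm σ X → A
  | .var x => ρ x
  | .op f k => α f fun i => (k i).eval α ρ

theorem Trm.eval_bind (α : σ.Alg A) (ρ : Y → A) (t : Trm σ X) (g : X → Trm σ Y) :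
    (t.bind g).eval α ρ = t.eval α fun x => (g x).eval α ρ := by
  induction t with
  | var x => rfl
  | op f k ih => exact congrArg (α f) (funext ih)

def Sgn.Alg.Satisfies (α : σ.Alg A) (E : Set (Eqn σ)) : Prop :=
  ∀ e ∈ E, ∀ ρ : ℕ → A, e.1.eval α ρ = e.2.eval α ρ

theorem Deriv.eval_eq {α : σ.Alg A} (hα : α.Satisfies E) {s t : Trm σ X} (h : Deriv E s t)
    (ρ : X → A) : s.eval α ρ = t.eval α ρ := by
  induction h with
  | ax he g => simp only [Trm.eval_bind, hα _ he]
  | refl => rfl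
  | symm _ ih => exact (ih ρ).symm
  | trans _ _ ih₁ ih₂ => exact (ih₁ ρ).trans (ih₂ ρ)
  | congr f _ ih => exact congrArg (α f) (funext fun i => ih i ρ)
  | subst g _ ih => simp only [Trm.eval_bind, ih]

end EquationalLogic

namespace FreeM

variable {σ : Sgn} {E : Set (Eqn σ)} {X Y Z : Type}

theorem mk_eq_mk_iff {a b : Trm σ X} : mk (E := E) a = mk b ↔ Deriv E a b :=
  ⟨fun h => (Deriv.equivalence E X).eqvGen_iff.1 (Quot.eqvGen_exact h), Quot.sound⟩

theorem mk_out (q : FreeM σ E X) : mk (Quot.out q) = q := Quot.out_eq q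

theorem mk_bind_congr (t : Trm σ X) {g g' : X → Trm σ Y}
    (h : ∀ x, mk (E := E) (g x) = mk (g' x)) : mk (E := E) (t.bind g) = mk (t.bind g') :=
  mk_eq_mk_iff.2 (Deriv.bind_congr t fun x => mk_eq_mk_iff.1 (h x))

theorem map_mk (f : X → Y) (t : Trm σ X) : map (E := E) f (mk t) = mk (t.rename f) :=
  mk_eq_mk_iff.2 (Deriv.subst _ (mk_eq_mk_iff.1 (mk_out _)))

theorem mul_mk (w : Trm σ (FreeM σ E X)) :
    mul (mk w) = mk (w.bind fun c : FreeM σ E X => Quot.out c) :=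
  mk_eq_mk_iff.2 (Deriv.subst _ (mk_eq_mk_iff.1 (mk_out _)))

theorem mul_mk_rename_mk (w : Trm σ (Trm σ X)) :
    mul (mk (w.rename (mk (E := E)))) = mk (w.bind id) := by
  rw [mul_mk, Trm.rename, Trm.bind_bind]
  exact mk_bind_congr w fun t => mk_out (mk t)

theorem map_unit (f : X → Y) (x : X) : map (E := E) f (unit x) = unit (f x) :=
  map_mk f (.var x)

theorem mul_unit (q : FreeM σ E X) : mul (unit q) = q := by
  rw [unit, mul_mk]
  exact mk_out q

theorem map_id (q : FreeM σ E X) : map id q = q := by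
  induction q using Quot.ind with
  | mk t => exact (map_mk id t).trans (congrArg mk t.bind_var)

theorem map_map (f : X → Y) (g : Y → Z) (q : FreeM σ E X) :
    map g (map f q) = map (g ∘ f) q := by
  induction q using Quot.ind with
  | mk t => simp only [← mk.eq_def, map_mk, Trm.rename, Trm.bind_bind]; rfl

theorem map_mul (f : X → Y) (q : FreeM σ E (FreeM σ E X)) :
    map f (mul q) = mul (map (map f) q) := by
  induction q using Quot.ind with
  | mk w =>
    simp only [← mk.eq_def, map_mk, mul_mk, Trm.rename, Trm.bind_bind]
    exact mk_bind_congr w fun a =>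
      ((map_mk f _).symm.trans (congrArg (map f) (mk_out a))).trans (mk_out _).symm

theorem mul_mul (q : FreeM σ E (FreeM σ E (FreeM σ E X))) :
    mul (mul q) = mul (map mul q) := by
  induction q using Quot.ind with
  | mk w =>
    simp only [← mk.eq_def, map_mk, mul_mk, Trm.rename, Trm.bind_bind]
    exact mk_bind_congr w fun a =>
      ((mul_mk _).symm.trans (congrArg mul (mk_out a))).trans (mk_out _).symm

noncomputable def alg : σ.Alg (FreeM σ E X) := fun f c => mk (.op f fun i => Quot.out (c i))

theorem alg_mk (f : σ.ops) (k : Fin (σ.ar f) → Trm σ X) :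
    alg (E := E) f (fun i => mk (k i)) = mk (.op f k) :=
  mk_eq_mk_iff.2 (Deriv.congr f fun _ => mk_eq_mk_iff.1 (mk_out _))

theorem mul_map_alg (F : X → FreeM σ E Y) (f : σ.ops) (c : Fin (σ.ar f) → FreeM σ E X) :
    mul (map F (alg f c)) = alg f fun i => mul (map F (c i)) := by
  obtain ⟨k, rfl⟩ : ∃ k : Fin (σ.ar f) → Trm σ X, c = fun i => mk (k i) :=
    ⟨fun i => Quot.out (c i), funext fun _ => (mk_out _).symm⟩
  calc mul (map F (alg f fun i => mk (k i)))
      = mk (((Trm.op f k).rename F).bind fun c => Quot.out c) := by rw [alg_mk, map_mk, mul_mk]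
    _ = alg f fun i => mk (((k i).rename F).bind fun c => Quot.out c) := (alg_mk f _).symm
    _ = alg f fun i => mul (map F (mk (k i))) := by simp only [map_mk, mul_mk]

end FreeM

namespace DistLaw

variable {SS TT : Thy} (d : DistLaw SS TT) {X Y : Type}

local notation "𝑺" => FreeM SS.sig SS.eqns
local notation "𝑻" => FreeM TT.sig TT.eqns

open FreeM (map mul unit)

noncomputable def act (p : 𝑺 (𝑻 (𝑺 X))) : 𝑻 (𝑺 X) :=
  map mul (d.app _ p)

theorem act_map_unit (q : 𝑺 (𝑺 X)) : d.act (map unit q) = unit (mul q) := by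
  rw [act, d.unitT, FreeM.map_unit]

theorem act_mul (r : 𝑺 (𝑺 (𝑻 (𝑺 X)))) : d.act (mul r) = d.act (map d.act r) :=
  calc d.act (mul r)
      = map mul (map mul (d.app _ (map (d.app _) r))) := by rw [act, d.mulS]
    _ = map mul (map (map mul) (d.app _ (map (d.app _) r))) := by
        simp only [FreeM.map_map]
        exact congrArg (map · _) (funext FreeM.mul_mul)
    _ = d.act (map d.act r) := by
        rw [← d.natural, FreeM.map_map]; rfl

noncomputable def bind (q : 𝑻 (𝑺 X)) (h : X → 𝑻 (𝑺 Y)) : 𝑻 (𝑺 Y) :=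
  mul (map (fun r => d.act (map h r)) q)

theorem bind_unit (x : X) (h : X → 𝑻 (𝑺 Y)) : d.bind (unit (unit x)) h = h x := by
  rw [bind, FreeM.map_unit, FreeM.mul_unit, FreeM.map_unit, act, d.unitS, FreeM.map_map]
  exact (congrArg (map · (h x)) (funext FreeM.mul_unit)).trans (FreeM.map_id _)

theorem bind_act (p : 𝑺 (𝑻 (𝑺 X))) (h : X → 𝑻 (𝑺 Y)) :
    d.bind (d.act p) h = d.act (map (d.bind · h) p) := by
  set F := fun r => d.act (map h r)
  have hF : ∀ r, F (mul r) = d.act (map F r) := fun r => by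
    simp only [F, FreeM.map_mul, act_mul, FreeM.map_map]; rfl
  calc d.bind (d.act p) h
      = mul (map (fun r => d.act (map F r)) (d.app _ p)) := by
        simp only [bind, act, FreeM.map_map]
        exact congrArg (fun g => mul (map g _)) (funext hF)
    _ = mul (map (map mul) (map (d.app _) (d.app _ (map (map F) p)))) := by
        rw [d.natural, FreeM.map_map, FreeM.map_map]; rfl
    _ = d.act (map (d.bind · h) p) := by
        rw [← FreeM.map_mul, ← d.mulT, act, FreeM.map_map]; rfl

noncomputable def alg : (SS.sig.sum TT.sig).Alg (𝑻 (𝑺 X))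
  | .inl f, c => d.act (FreeM.mk (.op f fun i => .var (c i)))
  | .inr f, c => FreeM.alg f c

theorem bind_alg (f : (SS.sig.sum TT.sig).ops) (c : Fin _ → 𝑻 (𝑺 X)) (h : X → 𝑻 (𝑺 Y)) :
    d.bind (d.alg f c) h = d.alg f fun i => d.bind (c i) h := by
  cases f with
  | inl f => rw [alg, bind_act, FreeM.map_mk]; rfl
  | inr f => exact FreeM.mul_map_alg _ f c

theorem eval_eq_bind (u : Trm (SS.sig.sum TT.sig) X) (ρ : X → 𝑻 (𝑺 Y)) :
    u.eval d.alg ρ = d.bind (u.eval d.alg fun x => unit (unit x)) ρ := by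
  induction u with
  | var x => exact (d.bind_unit x ρ).symm
  | op f k ih => exact (congrArg (d.alg f) (funext ih)).trans (d.bind_alg f _ ρ).symm

theorem eval_inl (s : Trm SS.sig X) :
    (Trm.inl (τ := TT.sig) s).eval d.alg (fun x => unit (unit x))
      = unit (FreeM.mk s) := by
  induction s with
  | var x => rfl
  | op f k ih =>
    calc (Trm.inl (.op f k)).eval d.alg _
        = d.act (FreeM.mk (.op f fun i => .var (unit (FreeM.mk (k i))))) :=
          congrArg (fun c : Fin _ → 𝑻 (𝑺 X) => d.act (FreeM.mk (.op f fun i => .var (c i))))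
            (funext ih)
      _ = d.act (map unit
            (FreeM.mk ((Trm.op f fun i => .var (k i)).rename FreeM.mk))) := by
          rw [FreeM.map_mk]; rfl
      _ = unit (FreeM.mk (.op f k)) := by
          rw [act_map_unit, FreeM.mul_mk_rename_mk]; rfl

theorem eval_inr (t : Trm TT.sig X) (g : X → Trm TT.sig (𝑺 Y)) :
    (Trm.inr (σ := SS.sig) t).eval d.alg (fun x => FreeM.mk (g x)) = FreeM.mk (t.bind g) := by
  induction t with
  | var x => rfl
  | op f k ih => exact (congrArg (FreeM.alg f) (funext ih)).trans (FreeM.alg_mk f _)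

theorem eval_sepTS (t : Trm TT.sig (Trm SS.sig X)) :
    (sepTS t).eval d.alg (fun x => unit (unit x)) = clTS SS TT t := by
  rw [sepTS, Trm.eval_bind, funext d.eval_inl]
  exact d.eval_inr t _

theorem eval_sepST (s : Trm SS.sig (Trm TT.sig X)) :
    (sepST s).eval d.alg (fun x => unit (unit x)) = d.app X (clST SS TT s) := by
  induction s with
  | var t =>
    calc (Trm.inr t).eval d.alg _ = FreeM.mk (t.rename unit) := d.eval_inr t _
      _ = d.app X (unit (FreeM.mk t)) := by rw [d.unitS, FreeM.map_mk]
  | op f k ih =>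
    set q : 𝑺 (𝑺 (𝑻 X)) := FreeM.mk (.op f fun i => .var (clST SS TT (k i)))
    have hq : mul q = clST SS TT (.op f k) :=
      FreeM.mul_mk_rename_mk (.op f fun i => .var ((k i).rename FreeM.mk))
    calc (sepST (.op f k)).eval d.alg _
        = d.act (FreeM.mk (.op f fun i => .var (d.app X (clST SS TT (k i))))) :=
          congrArg (fun c : Fin _ → 𝑻 (𝑺 X) => d.act (FreeM.mk (.op f fun i => .var (c i))))
            (funext ih)
      _ = d.act (map (d.app X) q) := by rw [FreeM.map_mk]; rfl
      _ = d.app X (clST SS TT (.op f k)) := by rw [act, ← d.mulS, hq]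

theorem alg_satisfies_EUlam : (d.alg (X := Y)).Satisfies (EUlam SS TT d) := by
  intro e he ρ
  rw [d.eval_eq_bind e.1, d.eval_eq_bind e.2]
  congr 1
  rcases he with (⟨e₀, he₀, rfl⟩ | ⟨e₀, he₀, rfl⟩) | ⟨s, t, rfl, hst⟩
  · simp only [eval_inl, FreeM.mk_eq_mk_iff.2 (Deriv.of_mem he₀)]
  · exact (d.eval_inr e₀.1 _).trans
      ((FreeM.mk_eq_mk_iff.2 (Deriv.subst _ (Deriv.of_mem he₀))).trans (d.eval_inr e₀.2 _).symm)
  · rw [eval_sepST, eval_sepTS, hst]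

end DistLaw

/-- Any two separated terms that are `𝕌^λ`-equal are equal modulo `(𝕊,𝕋)`:
if `t[s_x/x] =_{𝕌^λ} t'[s'_y/y]` then `[t[[s_x]_𝕊/x]]_𝕋 = [t'[[s'_y]_𝕊/y]]_𝕋`
in `TS𝒱`. -/
theorem Ulam_equal_separated_implies_equal_modulo_ST (SS TT : Thy) (d : DistLaw SS TT)
    (t t' : Trm TT.sig (Trm SS.sig ℕ))
    (h : Deriv (EUlam SS TT d) (sepTS t) (sepTS t')) :
    clTS SS TT t = clTS SS TT t' := by
  rw [← d.eval_sepTS, ← d.eval_sepTS]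
  exact h.eval_eq d.alg_satisfies_EUlam _
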